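/- Let M be a symmetric positive definite n×n real matrix, and let D and Θ be n×n diagonal matrices with strictly positive diagonal entries. Then for every nonzero real vector w, the quotient (wᵀ (D + Θ)⁻¹ w) / (wᵀ (M + Θ)⁻¹ w) is well defined (both quadratic forms are positive) and satisfies (wᵀ (D + Θ)⁻¹ w) / (wᵀ (M + Θ)⁻¹ w) ≥ min{λmin(D⁻¹M), 1}. -/

import Mathlib

open Matrix

/-- The set of Rayleigh quotients `(vᵀ P v)/(vᵀ Q v)` over nonzero real vectors `v`.
For `P = M` symmetric positive definite and `Q = D` diagonal positive definite,
`sInf` of this set is `λmin(D⁻¹M)`. -/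
def rayleighSet {n : ℕ} (P Q : Matrix (Fin n) (Fin n) ℝ) : Set ℝ :=
  {r | ∃ v : Fin n → ℝ, v ≠ 0 ∧ r = (v ⬝ᵥ (P *ᵥ v)) / (v ⬝ᵥ (Q *ᵥ v))}

/-!
Write `A = M + Θ`, `B = D + Θ` and `L = min{λmin(D⁻¹M), 1}`. Since `L ≤ λmin(D⁻¹M)` and `L ≤ 1`,
`L · xᵀBx ≤ xᵀAx` for every `x`, i.e. `L • B ≤ A` in the Loewner order, and inversion reverses
this order. Concretely, with `u = A⁻¹w`, `z = B⁻¹w`, `a = wᵀA⁻¹w = uᵀAu = uᵀBz` and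
`b = wᵀB⁻¹w = zᵀBz`, Cauchy–Schwarz for the form of `B` gives
`L a² ≤ L (uᵀBu)(zᵀBz) ≤ (uᵀAu) b = a b`, hence `L a ≤ b`.
-/

namespace Matrix

variable {n : Type*} [Fintype n]

lemma PosSemidef.dotProduct_mulVec_mul_self_le {B : Matrix n n ℝ} (hB : B.PosSemidef)
    (x y : n → ℝ) :
    (x ⬝ᵥ (B *ᵥ y)) * (x ⬝ᵥ (B *ᵥ y)) ≤ (x ⬝ᵥ (B *ᵥ x)) * (y ⬝ᵥ (B *ᵥ y)) := by
  let _ := B.toSeminormedAddCommGroup hB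
  let _ := B.toInnerProductSpace hB
  have hinner (x y : n → ℝ) : inner ℝ x y = x ⬝ᵥ (B *ᵥ y) := dotProduct_comm _ _
  simpa only [hinner] using real_inner_mul_inner_self_le x y

lemma dotProduct_mulVec_comm_of_isHermitian {B : Matrix n n ℝ} (hB : B.IsHermitian)
    (x y : n → ℝ) : x ⬝ᵥ (B *ᵥ y) = y ⬝ᵥ (B *ᵥ x) := by
  rw [dotProduct_mulVec, ← mulVec_transpose, (isHermitian_iff_isSymm.mp hB).eq, dotProduct_comm]

variable [DecidableEq n]

lemma dotProduct_inv_mulVec_eq {A : Matrix n n ℝ} (hA : IsUnit A) (w : n → ℝ) :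
    w ⬝ᵥ (A⁻¹ *ᵥ w) = (A⁻¹ *ᵥ w) ⬝ᵥ (A *ᵥ (A⁻¹ *ᵥ w)) := by
  rw [mulVec_mulVec, mul_nonsing_inv _ ((isUnit_iff_isUnit_det A).mp hA), one_mulVec,
    dotProduct_comm]

lemma PosDef.mul_dotProduct_inv_mulVec_le {A B : Matrix n n ℝ} (hB : B.PosDef) (hA : IsUnit A)
    {c : ℝ} (hc : 0 ≤ c) (hBA : ∀ x, c * (x ⬝ᵥ (B *ᵥ x)) ≤ x ⬝ᵥ (A *ᵥ x)) (w : n → ℝ) :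
    c * (w ⬝ᵥ (A⁻¹ *ᵥ w)) ≤ w ⬝ᵥ (B⁻¹ *ᵥ w) := by
  set u := A⁻¹ *ᵥ w
  set z := B⁻¹ *ᵥ w
  set a := w ⬝ᵥ u
  set b := w ⬝ᵥ z
  have hBz : B *ᵥ z = w := by
    rw [mulVec_mulVec, mul_nonsing_inv _ ((isUnit_iff_isUnit_det B).mp hB.isUnit), one_mulVec]
  have huBz : u ⬝ᵥ (B *ᵥ z) = a := by rw [hBz, dotProduct_comm]
  have hzBz : z ⬝ᵥ (B *ᵥ z) = b := by rw [hBz, dotProduct_comm]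
  have hb : 0 ≤ b := by simpa [← hzBz] using hB.posSemidef.dotProduct_mulVec_nonneg z
  have hcs : a * a ≤ (u ⬝ᵥ (B *ᵥ u)) * b := by
    rw [← huBz, ← hzBz, dotProduct_mulVec_comm_of_isHermitian hB.isHermitian u u]
    exact hB.posSemidef.dotProduct_mulVec_mul_self_le u z
  have hcBu : c * (u ⬝ᵥ (B *ᵥ u)) ≤ a := (hBA u).trans_eq (dotProduct_inv_mulVec_eq hA w).symm
  rcases le_or_gt a 0 with ha | ha
  · exact (mul_nonpos_of_nonneg_of_nonpos hc ha).trans hb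
  · refine le_of_mul_le_mul_right ?_ ha
    calc c * a * a ≤ c * (u ⬝ᵥ (B *ᵥ u)) * b := by
          rw [mul_assoc, mul_assoc]; exact mul_le_mul_of_nonneg_left hcs hc
      _ ≤ a * b := mul_le_mul_of_nonneg_right hcBu hb
      _ = b * a := mul_comm a b

end Matrix

lemma nonneg_of_mem_rayleighSet {n : ℕ} {P Q : Matrix (Fin n) (Fin n) ℝ} (hP : P.PosSemidef)
    (hQ : Q.PosSemidef) {r : ℝ} (hr : r ∈ rayleighSet P Q) : 0 ≤ r := by
  obtain ⟨v, -, rfl⟩ := hr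
  exact div_nonneg (by simpa using hP.dotProduct_mulVec_nonneg v)
    (by simpa using hQ.dotProduct_mulVec_nonneg v)

lemma sInf_rayleighSet_mul_le {n : ℕ} {P Q : Matrix (Fin n) (Fin n) ℝ} (hP : P.PosSemidef)
    (hQ : Q.PosDef) (v : Fin n → ℝ) :
    sInf (rayleighSet P Q) * (v ⬝ᵥ (Q *ᵥ v)) ≤ v ⬝ᵥ (P *ᵥ v) := by
  rcases eq_or_ne v 0 with rfl | hv
  · simp
  have hQv : 0 < v ⬝ᵥ (Q *ᵥ v) := by simpa using hQ.dotProduct_mulVec_pos hv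
  have hbdd : BddBelow (rayleighSet P Q) :=
    ⟨0, fun _ ↦ nonneg_of_mem_rayleighSet hP hQ.posSemidef⟩
  rw [← le_div_iff₀ hQv]
  exact csInf_le hbdd ⟨v, hv, rfl⟩

/-- For every nonzero `w`, both quadratic forms `wᵀ(D+Θ)⁻¹w` and `wᵀ(M+Θ)⁻¹w` are positive
and their quotient is bounded below by `min{λmin(D⁻¹M), 1}`. -/
theorem inverse_quadratic_form_quotient_bound {n : ℕ}
    (M : Matrix (Fin n) (Fin n) ℝ) (hM : M.PosDef)
    (d θ : Fin n → ℝ) (hd : ∀ i, 0 < d i) (hθ : ∀ i, 0 < θ i)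
    (w : Fin n → ℝ) (hw : w ≠ 0) :
    0 < w ⬝ᵥ ((Matrix.diagonal d + Matrix.diagonal θ)⁻¹ *ᵥ w) ∧
    0 < w ⬝ᵥ ((M + Matrix.diagonal θ)⁻¹ *ᵥ w) ∧
    min (sInf (rayleighSet M (Matrix.diagonal d))) 1 ≤
      (w ⬝ᵥ ((Matrix.diagonal d + Matrix.diagonal θ)⁻¹ *ᵥ w)) /
        (w ⬝ᵥ ((M + Matrix.diagonal θ)⁻¹ *ᵥ w)) := by
  set L := min (sInf (rayleighSet M (diagonal d))) 1
  have hD : (diagonal d).PosDef := .diagonal hd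
  have hΘ : (diagonal θ).PosSemidef := (PosDef.diagonal hθ).posSemidef
  have hA : (M + diagonal θ).PosDef := hM.add_posSemidef hΘ
  have hB : (diagonal d + diagonal θ).PosDef := hD.add_posSemidef hΘ
  have hL : 0 ≤ L := le_min (Real.sInf_nonneg fun _ ↦ nonneg_of_mem_rayleighSet hM.posSemidef hD.posSemidef)
    zero_le_one
  have hLoewner (v : Fin n → ℝ) :
      L * (v ⬝ᵥ ((diagonal d + diagonal θ) *ᵥ v)) ≤ v ⬝ᵥ ((M + diagonal θ) *ᵥ v) := by
    have hDv : 0 ≤ v ⬝ᵥ (diagonal d *ᵥ v) := by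
      simpa using hD.posSemidef.dotProduct_mulVec_nonneg v
    have hΘv : 0 ≤ v ⬝ᵥ (diagonal θ *ᵥ v) := by simpa using hΘ.dotProduct_mulVec_nonneg v
    simp only [add_mulVec, dotProduct_add, mul_add]
    exact add_le_add
      ((mul_le_mul_of_nonneg_right (min_le_left _ _) hDv).trans
        (sInf_rayleighSet_mul_le hM.posSemidef hD v))
      (mul_le_of_le_one_left hΘv (min_le_right _ _))
  have hApos : 0 < w ⬝ᵥ ((M + diagonal θ)⁻¹ *ᵥ w) := by
    simpa using hA.inv.dotProduct_mulVec_pos hw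
  refine ⟨by simpa using hB.inv.dotProduct_mulVec_pos hw, hApos, ?_⟩
  rw [le_div_iff₀ hApos]
  exact hB.mul_dotProduct_inv_mulVec_le hA.isUnit hL hLoewner w
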